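/- For every positive integer n, as an identity of rational functions in q: ∑ over partitions (1^{m_1},…,n^{m_n}) of n of ∏_{i=1}^n 1/(m_i!·(i(1−q^i))^{m_i}) equals ∏_{i=1}^n 1/(1 − q^i). -/

import Mathlib

/-!
Put `c i = 1 / (i (1 - q^i))` and let `F n` be the left-hand side. Deleting one part `k` from a
partition `λ ⊢ n` is a bijection onto the partitions of `n - k` that multiplies the weight `w(λ)`
by `m_k(λ) / c k`, so `∑_λ m_k(λ) w(λ) = c k F(n - k)`. Summing `k` times this over `k` and using
`∑_k k m_k(λ) = n` gives `n F n = ∑_{k=1}^n F(n - k) / (1 - q^k)`, with `F 0 = 1`.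

The product `H n = ∏_{i ≤ n} 1 / (1 - q^i)` obeys the same recurrence: multiplying its
`(n+1)`-st instance by `1 - q^(n+1)` and using `H j = (1 - q^(j+1)) H (j+1)` leaves the `n`-th
instance plus `∑_{j ≤ n} q^j H j`, which telescopes to `H n`.
-/

open Finset Nat

theorem Nat.Partition.sum_range_add_one_mul_count {n : ℕ} (P : n.Partition) :
    ∑ i ∈ range n, (i + 1) * P.parts.count (i + 1) = n := by
  have h := sum_multiset_count_of_subset P.parts (range (n + 1)) fun i hi =>
    mem_range_succ_iff.2 (P.le_of_mem_parts (Multiset.mem_toFinset.1 hi))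
  rw [P.parts_sum, sum_range_succ'] at h
  simpa [mul_comm] using h.symm

section PartitionSum

variable {K : Type*} [Field K] (c : ℕ → K)

def partsWeight (s : Multiset ℕ) : K := ∏ i ∈ s.toFinset, c i ^ s.count i / (s.count i)!

def partitionSum (n : ℕ) : K := ∑ P : n.Partition, partsWeight c P.parts

theorem partsWeight_eq_prod_of_subset {s : Multiset ℕ} {S : Finset ℕ} (h : s.toFinset ⊆ S) :
    partsWeight c s = ∏ i ∈ S, c i ^ s.count i / (s.count i)! :=
  prod_subset h fun i _ hi => by simp [Multiset.count_eq_zero_of_notMem (by simpa using hi)]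

theorem partitionSum_eq_sum_prod_Icc (n : ℕ) :
    partitionSum c n =
      ∑ P : n.Partition, ∏ i ∈ Icc 1 n, c i ^ P.parts.count i / (P.parts.count i)! :=
  sum_congr rfl fun P _ => partsWeight_eq_prod_of_subset c fun i hi => by
    have hi := Multiset.mem_toFinset.1 hi
    exact mem_Icc.2 ⟨P.parts_pos hi, P.le_of_mem_parts hi⟩

theorem partitionSum_zero : partitionSum c 0 = 1 := by
  simp [partitionSum, partsWeight]

variable [CharZero K]

theorem count_add_one_mul_partsWeight_cons (k : ℕ) (s : Multiset ℕ) :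
    (s.count k + 1 : K) * partsWeight c (k ::ₘ s) = c k * partsWeight c s := by
  have hk := mem_insert_self k s.toFinset
  rw [partsWeight_eq_prod_of_subset c (S := insert k s.toFinset) (by simp),
    partsWeight_eq_prod_of_subset c (subset_insert k s.toFinset),
    ← mul_prod_erase _ _ hk, ← mul_prod_erase _ _ hk,
    prod_congr rfl fun i hi => by rw [Multiset.count_cons_of_ne (ne_of_mem_erase hi)],
    Multiset.count_cons_self, factorial_succ]
  push_cast
  field_simp
  ring

theorem sum_count_mul_partsWeight {n k : ℕ} (hk : 1 ≤ k) (hkn : k ≤ n) :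
    ∑ P : n.Partition, (P.parts.count k : K) * partsWeight c P.parts =
      c k * partitionSum c (n - k) := by
  set e := Nat.Partition.partitionWithPartEquiv hk hkn
  rw [partitionSum, mul_sum]
  refine (Fintype.sum_of_injective (fun Q => (e.symm Q).1)
    (Subtype.val_injective.comp e.symm.injective) _ _ ?_ ?_).symm
  · intro P hP
    have : k ∉ P.parts := fun h => hP ⟨e ⟨P, h⟩, by simp⟩
    simp [Multiset.count_eq_zero_of_notMem this]
  · intro Q
    simp [e, count_add_one_mul_partsWeight_cons]

theorem partitionSum_recurrence (n : ℕ) :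
    (n + 1 : K) * partitionSum c (n + 1) =
      ∑ p ∈ antidiagonal n, (p.1 + 1 : K) * c (p.1 + 1) * partitionSum c p.2 := by
  have hsize (P : (n + 1).Partition) :
      (n + 1 : K) = ∑ i ∈ range (n + 1), (i + 1 : K) * P.parts.count (i + 1) := by
    exact_mod_cast P.sum_range_add_one_mul_count.symm
  calc (n + 1 : K) * partitionSum c (n + 1)
      = ∑ P : (n + 1).Partition, ∑ i ∈ range (n + 1),
          (i + 1 : K) * (P.parts.count (i + 1) * partsWeight c P.parts) := by
        rw [partitionSum, mul_sum]
        refine sum_congr rfl fun P _ => ?_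
        rw [hsize P, sum_mul]
        simp only [mul_assoc]
    _ = ∑ i ∈ range (n + 1), (i + 1 : K) *
          ∑ P : (n + 1).Partition, P.parts.count (i + 1) * partsWeight c P.parts := by
        rw [sum_comm]
        simp only [mul_sum]
    _ = ∑ i ∈ range (n + 1), (i + 1 : K) * (c (i + 1) * partitionSum c (n - i)) := by
        refine sum_congr rfl fun i hi => ?_
        rw [sum_count_mul_partsWeight c (by omega) (by simpa using hi), Nat.add_sub_add_right]
    _ = _ := by
        rw [Nat.sum_antidiagonal_eq_sum_range_succ_mk]
        simp only [mul_assoc]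

end PartitionSum

section InvQPochhammer

variable {K : Type*} [Field K] (x : K)

def invQPochhammer (n : ℕ) : K := ∏ i ∈ Icc 1 n, 1 / (1 - x ^ i)

theorem invQPochhammer_zero : invQPochhammer x 0 = 1 := by simp [invQPochhammer]

variable {x}

theorem invQPochhammer_eq_mul_succ {n : ℕ} (hx : x ^ (n + 1) ≠ 1) :
    invQPochhammer x n = (1 - x ^ (n + 1)) * invQPochhammer x (n + 1) := by
  rw [invQPochhammer, invQPochhammer, prod_Icc_succ_top (by omega)]
  field_simp [sub_ne_zero.2 hx.symm]

theorem sum_range_pow_mul_invQPochhammer (hx : ∀ i, x ^ (i + 1) ≠ 1) (n : ℕ) :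
    ∑ j ∈ range (n + 1), x ^ j * invQPochhammer x j = invQPochhammer x n := by
  induction n with
  | zero => simp [invQPochhammer_zero]
  | succ n ih =>
    rw [sum_range_succ, ih, invQPochhammer_eq_mul_succ (hx n)]
    ring

theorem invQPochhammer_recurrence (hx : ∀ i, x ^ (i + 1) ≠ 1) (n : ℕ) :
    (n + 1 : K) * invQPochhammer x (n + 1) =
      ∑ p ∈ antidiagonal n, 1 / (1 - x ^ (p.1 + 1)) * invQPochhammer x p.2 := by
  induction n with
  | zero => simp [invQPochhammer]
  | succ n ih =>
    have hn : 1 - x ^ (n + 2) ≠ 0 := sub_ne_zero.2 (hx (n + 1)).symm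
    have hterm : ∀ p ∈ antidiagonal n,
        (1 - x ^ (n + 2)) * (1 / (1 - x ^ (p.1 + 1)) * invQPochhammer x (p.2 + 1)) =
          1 / (1 - x ^ (p.1 + 1)) * invQPochhammer x p.2 +
            x ^ (p.2 + 1) * invQPochhammer x (p.2 + 1) := by
      intro p hp
      rw [Finset.HasAntidiagonal.mem_antidiagonal] at hp
      have h1 : 1 - x ^ (p.1 + 1) ≠ 0 := sub_ne_zero.2 (hx p.1).symm
      have hpow : x ^ (n + 2) = x ^ (p.1 + 1) * x ^ (p.2 + 1) := by
        rw [← pow_add]; congr 1; omega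
      rw [invQPochhammer_eq_mul_succ (hx p.2), hpow]
      field_simp
      ring
    have htele : 1 + ∑ p ∈ antidiagonal n, x ^ (p.2 + 1) * invQPochhammer x (p.2 + 1) =
        invQPochhammer x (n + 1) := by
      rw [← sum_range_pow_mul_invQPochhammer hx, sum_range_succ', ← Nat.sum_antidiagonal_swap,
        Nat.sum_antidiagonal_eq_sum_range_succ_mk]
      simp [invQPochhammer_zero, add_comm]
    apply mul_left_cancel₀ hn
    calc (1 - x ^ (n + 2)) * ((((n + 1 : ℕ) : K) + 1) * invQPochhammer x (n + 1 + 1))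
        = (n + 1 : K) * invQPochhammer x (n + 1) + invQPochhammer x (n + 1) := by
          rw [invQPochhammer_eq_mul_succ (hx (n + 1))]
          push_cast
          ring
      _ = (1 - x ^ (n + 2)) * (1 / (1 - x ^ (n + 2)) * invQPochhammer x 0) +
            ∑ p ∈ antidiagonal n, (1 - x ^ (n + 2)) *
              (1 / (1 - x ^ (p.1 + 1)) * invQPochhammer x (p.2 + 1)) := by
          rw [sum_congr rfl hterm, sum_add_distrib, ih, ← htele, invQPochhammer_zero]
          field_simp
          ring
      _ = _ := by
          rw [Nat.sum_antidiagonal_succ', mul_add, mul_sum]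

end InvQPochhammer

theorem eq_of_recurrence {R : Type*} [CommRing R] [IsDomain R] [CharZero R] {a b r : ℕ → R}
    (h0 : a 0 = b 0)
    (ha : ∀ n : ℕ, (n + 1 : R) * a (n + 1) = ∑ p ∈ antidiagonal n, r p.1 * a p.2)
    (hb : ∀ n : ℕ, (n + 1 : R) * b (n + 1) = ∑ p ∈ antidiagonal n, r p.1 * b p.2) : a = b := by
  funext n
  induction n using Nat.strong_induction_on with
  | _ n ih =>
    cases n with
    | zero => exact h0
    | succ n =>
      refine mul_left_cancel₀ (Nat.cast_add_one_ne_zero n) ?_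
      rw [ha, hb]
      exact sum_congr rfl fun p hp => by
        rw [ih p.2 (Nat.antidiagonal.snd_lt hp)]

theorem RatFunc.X_pow_ne_one {K : Type*} [Field K] {i : ℕ} (hi : i ≠ 0) :
    (X : RatFunc K) ^ i ≠ 1 := by
  rw [← map_one (algebraMap (Polynomial K) (RatFunc K)), ← algebraMap_X, ← map_pow, Ne,
    (algebraMap_injective K).eq_iff]
  exact fun h => hi (by simpa using congrArg Polynomial.natDegree h)

open RatFunc in
theorem cayley_formula_general (n : ℕ) :
    ∑ P : Nat.Partition n, ∏ i ∈ Finset.Icc 1 n,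
        (1 : RatFunc ℚ) /
          (((P.parts.count i).factorial : RatFunc ℚ) *
            ((i : RatFunc ℚ) * (1 - RatFunc.X ^ i)) ^ (P.parts.count i)) =
      ∏ i ∈ Finset.Icc 1 n, (1 : RatFunc ℚ) / (1 - RatFunc.X ^ i) := by
  set c : ℕ → RatFunc ℚ := fun i => 1 / ((i : RatFunc ℚ) * (1 - X ^ i))
  have hcoeff (i : ℕ) : (i + 1 : RatFunc ℚ) * c (i + 1) = 1 / (1 - X ^ (i + 1)) := by
    simp only [c]
    field_simp
    push_cast
    ring
  have hrec : partitionSum c = invQPochhammer X :=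
    eq_of_recurrence (r := fun i => 1 / (1 - X ^ (i + 1)))
      (by rw [partitionSum_zero, invQPochhammer_zero])
      (fun m => by simp only [partitionSum_recurrence, hcoeff])
      (invQPochhammer_recurrence fun i => X_pow_ne_one i.succ_ne_zero)
  rw [← invQPochhammer, ← congrFun hrec n, partitionSum_eq_sum_prod_Icc]
  exact sum_congr rfl fun P _ => prod_congr rfl fun i _ => by simp only [c]; ring

open RatFunc in
theorem cayley_formula (n : ℕ) (hn : 0 < n) :
    ∑ P : Nat.Partition n, ∏ i ∈ Finset.Icc 1 n,
        (1 : RatFunc ℚ) /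
          (((P.parts.count i).factorial : RatFunc ℚ) *
            ((i : RatFunc ℚ) * (1 - RatFunc.X ^ i)) ^ (P.parts.count i)) =
      ∏ i ∈ Finset.Icc 1 n, (1 : RatFunc ℚ) / (1 - RatFunc.X ^ i) :=
  cayley_formula_general n
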